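/- Let N ≥ 2, let Φ_p and Φ_n be nonempty finite families of rank vectors of size N, and let S = (S_1,…,S_N) be a real sequence satisfying E[S] = (N+1)/2 and (1/N)·Σ_i S_i² = (N+1)(2N+1)/6 (the mean and second moment of a rank vector of size N). Define A = Σ_{φ∈Φ_p} Σ_{i=1}^N (S_i − R^φ_i)² and B = Σ_{φ∈Φ_n} Σ_{i=1}^N (S_i − R^φ_i)², and let r_φ denote the Pearson correlation coefficient between S and R^φ. If A > 0, then the loss L = A/(A + B) satisfies L = 1 / (1 + Σ_{φ∈Φ_n}(1 − r_φ) / Σ_{φ∈Φ_p}(1 − r_φ)). -/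
import Mathlib


/-- Empirical mean of a finite sequence `s : Fin N → ℝ`. -/
noncomputable def empMean (N : ℕ) (s : Fin N → ℝ) : ℝ := (∑ i, s i) / N

/-- Empirical variance `(1/N)·Σ sᵢ² − (E[s])²` of a finite sequence. -/
noncomputable def empVar (N : ℕ) (s : Fin N → ℝ) : ℝ :=
  (∑ i, (s i) ^ 2) / N - (empMean N s) ^ 2

/-- Empirical standard deviation. -/
noncomputable def empStd (N : ℕ) (s : Fin N → ℝ) : ℝ := Real.sqrt (empVar N s)

/-- Empirical covariance of two sequences of length `N`. -/
noncomputable def empCov (N : ℕ) (S R : Fin N → ℝ) : ℝ :=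
  (∑ i, S i * R i) / N - empMean N S * empMean N R

/-- Pearson correlation coefficient of two sequences of length `N`. -/
noncomputable def pearson (N : ℕ) (S R : Fin N → ℝ) : ℝ :=
  empCov N S R / (empStd N S * empStd N R)

/-- A rank vector of size `N`: a real-valued sequence whose values are exactly the
integers `1, …, N`. -/
def IsRankVector (N : ℕ) (R : Fin N → ℝ) : Prop :=
  ∃ π : Equiv.Perm (Fin N), ∀ i, R i = ((π i : ℕ) : ℝ) + 1

lemma sum_ranks (n : ℕ) : ∑ i ∈ Finset.range n, ((i:ℝ)+1) = (n:ℝ)*((n:ℝ)+1)/2 := by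
  induction n with
  | zero => simp
  | succ n ih => rw [Finset.sum_range_succ, ih]; push_cast; ring

lemma sum_ranks_sq (n : ℕ) :
    ∑ i ∈ Finset.range n, ((i:ℝ)+1)^2 = (n:ℝ)*((n:ℝ)+1)*(2*(n:ℝ)+1)/6 := by
  induction n with
  | zero => simp
  | succ n ih => rw [Finset.sum_range_succ, ih]; push_cast; ring

lemma key (N : ℕ) (hN : 2 ≤ N) (S : Fin N → ℝ)
    (hmean : empMean N S = ((N : ℝ) + 1) / 2)
    (hmom : (∑ i, (S i) ^ 2) / N = ((N : ℝ) + 1) * (2 * (N : ℝ) + 1) / 6)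
    (R : Fin N → ℝ) (hR : IsRankVector N R) :
    ∑ i, (S i - R i) ^ 2
      = 2 * N * (((N:ℝ)^2 - 1)/12) * (1 - pearson N S R) := by
  obtain ⟨π, hπ⟩ := hR
  have hN2 : (2:ℝ) ≤ (N:ℝ) := by exact_mod_cast hN
  have hNz : (N:ℝ) ≠ 0 := by positivity
  have hv : (0:ℝ) < ((N:ℝ)^2 - 1)/12 := by nlinarith
  have sumR : ∑ i, R i = (N:ℝ)*((N:ℝ)+1)/2 := by
    calc ∑ i, R i = ∑ i, (((π i : ℕ):ℝ)+1) := by simp [hπ]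
    _ = ∑ i : Fin N, (((i : ℕ):ℝ)+1) := Equiv.sum_comp π (fun i : Fin N => ((i:ℕ):ℝ)+1)
    _ = ∑ i ∈ Finset.range N, ((i:ℝ)+1) := Fin.sum_univ_eq_sum_range (fun k => ((k:ℝ)+1)) N
    _ = _ := sum_ranks N
  have sumR2 : ∑ i, (R i)^2 = (N:ℝ)*((N:ℝ)+1)*(2*(N:ℝ)+1)/6 := by
    calc ∑ i, (R i)^2 = ∑ i, (((π i : ℕ):ℝ)+1)^2 := by simp [hπ]
    _ = ∑ i : Fin N, (((i : ℕ):ℝ)+1)^2 := Equiv.sum_comp π (fun i : Fin N => (((i:ℕ):ℝ)+1)^2)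
    _ = ∑ i ∈ Finset.range N, ((i:ℝ)+1)^2 := Fin.sum_univ_eq_sum_range (fun k => ((k:ℝ)+1)^2) N
    _ = _ := sum_ranks_sq N
  have hmeanR : empMean N R = ((N:ℝ)+1)/2 := by
    rw [empMean, sumR]; field_simp
  have hvarS : empVar N S = ((N:ℝ)^2 - 1)/12 := by
    rw [empVar, hmom, hmean]; ring
  have hvarR : empVar N R = ((N:ℝ)^2 - 1)/12 := by
    rw [empVar, sumR2, hmeanR]; field_simp; ring
  have hstd : empStd N S * empStd N R = ((N:ℝ)^2 - 1)/12 := by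
    rw [empStd, empStd, hvarS, hvarR]; exact Real.mul_self_sqrt hv.le
  have hsumS2 : ∑ i, (S i)^2 = (N:ℝ)*(((N:ℝ)+1)*(2*(N:ℝ)+1)/6) := by
    field_simp at hmom; linarith [hmom]
  have hsumS : ∑ i, S i = (N:ℝ)*(((N:ℝ)+1)/2) := by
    rw [empMean] at hmean; field_simp at hmean; linarith [hmean]
  have expand : ∑ i, (S i - R i)^2
      = ∑ i, (S i)^2 - 2*(∑ i, S i * R i) + ∑ i, (R i)^2 := by
    have h : ∀ i : Fin N, (S i - R i)^2 = S i^2 - 2*(S i*R i) + R i^2 := fun i => by ring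
    simp only [h, Finset.sum_add_distrib, Finset.sum_sub_distrib, ← Finset.mul_sum]
  have hvne : ((N:ℝ)^2-1)/12 ≠ 0 := hv.ne'
  have hc : ∀ x:ℝ, 2*(N:ℝ)*(((N:ℝ)^2-1)/12)*(1 - x/(((N:ℝ)^2-1)/12))
      = 2*(N:ℝ)*((((N:ℝ)^2-1)/12) - x) := by
    intro x
    have hpos : (0:ℝ) < (N:ℝ)^2-1 := by nlinarith
    rw [one_sub_div hvne]
    field_simp
  rw [expand, hsumS2, sumR2, pearson, empCov, hstd, hmean, hmeanR, hc]
  field_simp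
  ring

/-- Let `N ≥ 2`, let `Φ_p` and `Φ_n` be nonempty finite families of
rank vectors of size `N`, and let `S` have the mean `(N+1)/2` and second moment
`(N+1)(2N+1)/6` of a rank vector of size `N`. With
`A = Σ_{φ∈Φ_p} Σᵢ (Sᵢ − Rᵢ^φ)²`, `B = Σ_{φ∈Φ_n} Σᵢ (Sᵢ − Rᵢ^φ)²`, and `r_φ` the Pearson
correlation between `S` and `R^φ`, if `A > 0` then the loss `L = A/(A+B)` satisfies
`L = 1 / (1 + Σ_{φ∈Φ_n}(1 − r_φ) / Σ_{φ∈Φ_p}(1 − r_φ))`. -/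
theorem loss_eq_one_div_one_add_ratio (N : ℕ) (hN : 2 ≤ N)
    (ιp ιn : Type) [Fintype ιp] [Fintype ιn] [Nonempty ιp] [Nonempty ιn]
    (Rp : ιp → Fin N → ℝ) (Rn : ιn → Fin N → ℝ)
    (hRp : ∀ φ, IsRankVector N (Rp φ)) (hRn : ∀ φ, IsRankVector N (Rn φ))
    (S : Fin N → ℝ)
    (hmean : empMean N S = ((N : ℝ) + 1) / 2)
    (hmom : (∑ i, (S i) ^ 2) / N = ((N : ℝ) + 1) * (2 * (N : ℝ) + 1) / 6)
    (A B : ℝ)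
    (hA : A = ∑ φ, ∑ i, (S i - Rp φ i) ^ 2)
    (hB : B = ∑ φ, ∑ i, (S i - Rn φ i) ^ 2)
    (hApos : 0 < A) :
    A / (A + B) =
      1 / (1 + (∑ φ, (1 - pearson N S (Rn φ))) / (∑ φ, (1 - pearson N S (Rp φ)))) := by
  have hN2 : (2:ℝ) ≤ (N:ℝ) := by exact_mod_cast hN
  set c : ℝ := 2 * N * (((N:ℝ)^2 - 1)/12) with hcdef
  have hc : 0 < c := by rw [hcdef]; nlinarith
  set Sp := ∑ φ, (1 - pearson N S (Rp φ)) with hSpdef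
  set Sn := ∑ φ, (1 - pearson N S (Rn φ)) with hSndef
  have hAc : A = c * Sp := by
    rw [hA, hSpdef, Finset.mul_sum]
    exact Finset.sum_congr rfl fun φ _ => key N hN S hmean hmom _ (hRp φ)
  have hBc : B = c * Sn := by
    rw [hB, hSndef, Finset.mul_sum]
    exact Finset.sum_congr rfl fun φ _ => key N hN S hmean hmom _ (hRn φ)
  have hB0 : 0 ≤ B := by rw [hB]; positivity
  have hSp : 0 < Sp := by nlinarith [hApos, hAc]
  have hSn : 0 ≤ Sn := by nlinarith [hB0, hBc]
  have hps : 0 < Sp + Sn := by linarith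
  rw [hAc, hBc]
  rw [show c * Sp + c * Sn = c * (Sp + Sn) by ring]
  rw [mul_div_mul_left _ _ hc.ne']
  field_simp
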